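/- For every integer k ≥ 0 and every n ≥ 1, the following identity holds in ℤ[x_1,…,x_n]: e_k(X_n)² + 2·∑_{r=1}^{k} (−1)^r e_{k+r}(X_n) e_{k−r}(X_n) = e_k(X_n²). Equivalently, the Pragacz–Ratajski polynomial Q̃_{k,k}(X_n) equals e_k(x_1²,…,x_n²). -/

import Mathlib

/-!
With `E(t) = ∏ (1 + x_i t) = ∑ e_m t^m` one has `E(t) E(-t) = ∏ (1 - x_i² t²)`. The
coefficient of `t^{2k}` is `(-1)^k e_k(X²)` on the right and `∑_{i+j=2k} (-1)^j e_i e_j` on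
the left; that sum is symmetric under `i ↔ j`, so it folds to
`(-1)^k (e_k² + 2 ∑_{r ≥ 1} (-1)^r e_{k+r} e_{k-r})`.
-/

open MvPolynomial

namespace SympSchub

noncomputable section

abbrev MvP (n : ℕ) := MvPolynomial (Fin n) ℤ

/-- A partition: a weakly decreasing, eventually zero sequence of natural numbers.
`part i` is the `(i+1)`-st part `λ_{i+1}`. -/
structure PartitionN : Type where
  part : ℕ → ℕ
  antitone' : ∀ ⦃i j : ℕ⦄, i ≤ j → part j ≤ part i
  exists_eq_zero : ∃ N, part N = 0

namespace PartitionN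

/-- The length `ℓ(λ)`: the number of nonzero parts. -/
def len (p : PartitionN) : ℕ := Nat.find p.exists_eq_zero

/-- The weight `|λ| = ∑ λ_i`. -/
def weight (p : PartitionN) : ℕ := ∑ i ∈ Finset.range p.len, p.part i

/-- A partition is strict if its nonzero parts are distinct. -/
def IsStrict (p : PartitionN) : Prop := ∀ i, p.part (i + 1) ≠ 0 → p.part (i + 1) < p.part i

/-- The set of (nonzero) parts of a partition. -/
def partsFinset (p : PartitionN) : Finset ℕ := (Finset.range p.len).image p.part

/-- The multiset of (nonzero) parts of a partition. -/
def partsMultiset (p : PartitionN) : Multiset ℕ := ((List.range p.len).map p.part : List ℕ)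

end PartitionN

/-- `e_k(x_1^2, …, x_n^2)`, the k-th elementary symmetric polynomial in the squared
variables. -/
def esymm2 (n k : ℕ) : MvP n :=
  MvPolynomial.aeval (fun i : Fin n => (X i : MvP n) ^ 2) (esymm (Fin n) ℤ k)

/-- `Q̃_k = e_k(X_n)`. -/
def QP1 (n k : ℕ) : MvP n := esymm (Fin n) ℤ k

/-- `Q̃_{i,j} = Q̃_i Q̃_j + 2 ∑_{r=1}^{j} (-1)^r Q̃_{i+r} Q̃_{j-r}`. -/
def QP2 (n i j : ℕ) : MvP n :=
  QP1 n i * QP1 n j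
    + 2 * ∑ r ∈ Finset.Icc 1 j, (-1 : MvP n) ^ r * QP1 n (i + r) * QP1 n (j - r)

/-- The Pfaffian of a `2m × 2m` (skew-symmetric) matrix, defined through its upper
triangular entries, as a sum over perfect matchings. -/
def pfaffian {R : Type*} [CommRing R] (m : ℕ) (A : Fin (2 * m) → Fin (2 * m) → R) : R :=
  ∑ σ ∈ Finset.univ.filter
      (fun σ : Equiv.Perm (Fin (2 * m)) =>
        (∀ i : Fin m, σ ⟨2 * i.val, by have := i.isLt; omega⟩
            < σ ⟨2 * i.val + 1, by have := i.isLt; omega⟩) ∧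
        (∀ i j : Fin m, i < j → σ ⟨2 * i.val, by have := i.isLt; omega⟩
            < σ ⟨2 * j.val, by have := j.isLt; omega⟩)),
    (Equiv.Perm.sign σ : ℤ) •
      ∏ i : Fin m, A (σ ⟨2 * i.val, by have := i.isLt; omega⟩)
        (σ ⟨2 * i.val + 1, by have := i.isLt; omega⟩)

/-- The Pragacz–Ratajski polynomial `Q̃_λ(X_n)`, defined as the Pfaffian of the matrix
`(Q̃_{λ_i, λ_j})_{1 ≤ i < j ≤ 2m}` where `m` is the least positive integer with
`2m ≥ ℓ(λ)`.  (For `ℓ(λ) ≤ 2` this recovers `Q̃_{λ_1}` and `Q̃_{λ_1,λ_2}`.) -/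
def Qtilde (n : ℕ) (lam : PartitionN) : MvP n :=
  pfaffian (max 1 ((lam.len + 1) / 2))
    (fun i j => QP2 n (lam.part i.val) (lam.part j.val))

/-! ### Divided difference operators -/

theorem dvd_sub_rename_swap (n : ℕ) (a b : Fin n) (f : MvP n) :
    (X a - X b) ∣ (f - rename (Equiv.swap a b) f) := by
  induction f using MvPolynomial.induction_on with
  | C c => simp
  | add p q hp hq =>
    have h : p + q - rename (Equiv.swap a b) (p + q)
        = (p - rename (Equiv.swap a b) p) + (q - rename (Equiv.swap a b) q) := by
      rw [map_add]; ring
    rw [h]; exact dvd_add hp hq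
  | mul_X p k hp =>
    have h : p * X k - rename (Equiv.swap a b) (p * X k)
        = (p - rename (Equiv.swap a b) p) * X k
          + rename (Equiv.swap a b) p * (X k - X (Equiv.swap a b k)) := by
      rw [map_mul, rename_X]; ring
    rw [h]
    refine dvd_add (hp.mul_right _) (Dvd.dvd.mul_left ?_ _)
    rcases eq_or_ne k a with rfl | hka
    · rw [Equiv.swap_apply_left]
    · rcases eq_or_ne k b with rfl | hkb
      · rw [Equiv.swap_apply_right]
        exact dvd_sub_comm.mp dvd_rfl
      · rw [Equiv.swap_apply_of_ne_of_ne hka hkb, sub_self]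
        exact dvd_zero _

/-- The algebra endomorphism `s_0 : x_1 ↦ -x_1`. -/
def sgn0Hom (n : ℕ) : MvP n →ₐ[ℤ] MvP n :=
  aeval (fun k : Fin n => if (k : ℕ) = 0 then -(X k) else X k)

theorem dvd_sub_sgn0 (n : ℕ) (h : 0 < n) (f : MvP n) :
    ((2 : MvP n) * X ⟨0, h⟩) ∣ (f - sgn0Hom n f) := by
  induction f using MvPolynomial.induction_on with
  | C c => simp [sgn0Hom]
  | add p q hp hq =>
    have hh : p + q - sgn0Hom n (p + q)
        = (p - sgn0Hom n p) + (q - sgn0Hom n q) := by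
      rw [map_add]; ring
    rw [hh]; exact dvd_add hp hq
  | mul_X p k hp =>
    have hh : p * X k - sgn0Hom n (p * X k)
        = (p - sgn0Hom n p) * X k + sgn0Hom n p * (X k - sgn0Hom n (X k)) := by
      rw [map_mul]; ring
    rw [hh]
    refine dvd_add (hp.mul_right _) (Dvd.dvd.mul_left ?_ _)
    by_cases hk : (k : ℕ) = 0
    · have hk' : k = ⟨0, h⟩ := Fin.ext hk
      subst hk'
      have : sgn0Hom n (X (⟨0, h⟩ : Fin n)) = -(X (⟨0, h⟩ : Fin n)) := by
        simp [sgn0Hom]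
      rw [this]
      have : X (⟨0, h⟩ : Fin n) - -(X (⟨0, h⟩ : Fin n))
          = (2 : MvP n) * X (⟨0, h⟩ : Fin n) := by ring
      rw [this]
    · have : sgn0Hom n (X k) = X k := by
        simp [sgn0Hom, hk]
      rw [this, sub_self]
      exact dvd_zero _

/-- The divided difference operator `∂_i` on `ℤ[x_1,…,x_n]`: for `i ≥ 1`,
`∂_i f = (f - s_i f)/(x_i - x_{i+1})`, and `∂_0 f = (f - s_0 f)/(2 x_1)`. -/
def ddOp (n : ℕ) (i : Fin n) : MvP n → MvP n :=
  if _h : (i : ℕ) = 0 then fun f => (dvd_sub_sgn0 n i.pos f).choose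
  else fun f => (dvd_sub_rename_swap n ⟨(i : ℕ) - 1, by have := i.isLt; omega⟩ i f).choose

/-- `∂_{a_1} ∘ ⋯ ∘ ∂_{a_r}` for a word `(a_1, …, a_r)`. -/
def ddWord (n : ℕ) : List (Fin n) → MvP n → MvP n
  | [] => id
  | a :: t => fun f => ddOp n a (ddWord n t f)

/-! ### The hyperoctahedral group -/

/-- The generator `s_i` of the hyperoctahedral group `W_n`, realized as a permutation of
`Fin n × Bool` (a point `(j, b)` represents `j+1` if `b = false` and `-(j+1)` if `b = true`):
`s_0` changes the sign of the first entry, and `s_i` (for `i ≥ 1`) interchanges the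
`i`-th and `(i+1)`-st entries. -/
def genPerm (n : ℕ) (i : Fin n) : Equiv.Perm (Fin n × Bool) :=
  if _h : (i : ℕ) = 0 then
    Equiv.swap ((⟨0, i.pos⟩ : Fin n), false) ((⟨0, i.pos⟩ : Fin n), true)
  else
    Equiv.prodCongr
      (Equiv.swap (⟨(i : ℕ) - 1, by have := i.isLt; omega⟩ : Fin n) i)
      (Equiv.refl Bool)

/-- The hyperoctahedral group `W_n`, generated by `s_0, s_1, …, s_{n-1}`. -/
def WGroup (n : ℕ) : Subgroup (Equiv.Perm (Fin n × Bool)) :=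
  Subgroup.closure (Set.range (genPerm n))

/-- `l` is a word for `w` in the generators `s_0, …, s_{n-1}`. -/
def IsWord (n : ℕ) (w : Equiv.Perm (Fin n × Bool)) (l : List (Fin n)) : Prop :=
  (l.map (genPerm n)).prod = w

/-- The Coxeter length `ℓ(w)` of `w ∈ W_n`: the least length of a word for `w` in the
generators. -/
def lengthW (n : ℕ) (w : Equiv.Perm (Fin n × Bool)) : ℕ :=
  sInf { r | ∃ l : List (Fin n), IsWord n w l ∧ l.length = r }

/-- `l` is a reduced word for `w`. -/
def IsReducedWord (n : ℕ) (w : Equiv.Perm (Fin n × Bool)) (l : List (Fin n)) : Prop :=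
  IsWord n w l ∧ l.length = lengthW n w

open Classical in
/-- The divided difference operator `∂_w = ∂_{a_1} ∘ ⋯ ∘ ∂_{a_r}` for a reduced
decomposition `w = s_{a_1} ⋯ s_{a_r}`. -/
def ddW (n : ℕ) (w : Equiv.Perm (Fin n × Bool)) : MvP n → MvP n :=
  if h : ∃ l, IsReducedWord n w l then ddWord n h.choose else id

/-- The embedding of `S_n` into `W_n` (permutations with no sign changes). -/
def sPerm (n : ℕ) (π : Equiv.Perm (Fin n)) : Equiv.Perm (Fin n × Bool) :=
  Equiv.prodCongr π (Equiv.refl Bool)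

/-- The longest element `π_0 = (n, n-1, …, 1)` of `S_n`. -/
def perm0 (n : ℕ) : Equiv.Perm (Fin n) := Fin.revPerm

/-- The staircase monomial `x_1^{n-1} x_2^{n-2} ⋯ x_{n-1}`. -/
def staircase (n : ℕ) : MvP n := ∏ i : Fin n, (X i : MvP n) ^ (n - 1 - (i : ℕ))

/-- The type A Schubert polynomial `𝔖_π(X_n) = ∂_{π⁻¹ π_0} (x_1^{n-1} ⋯ x_{n-1})`. -/
def SchubertA (n : ℕ) (π : Equiv.Perm (Fin n)) : MvP n :=
  ddW n (sPerm n (π⁻¹ * perm0 n)) (staircase n)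

/-- The substitution `x_i ↦ -x_i`. -/
def negX (n : ℕ) : MvP n →ₐ[ℤ] MvP n := aeval (fun i : Fin n => -(X i : MvP n))

/-- `𝔠_{λ,π}(X_n) = Q̃_λ(X_n) · 𝔖_π(-X_n)`. -/
def cPoly (n : ℕ) (lam : PartitionN) (π : Equiv.Perm (Fin n)) : MvP n :=
  Qtilde n lam * negX n (SchubertA n π)

/-! ### Kraśkiewicz tableaux and symplectic Schubert polynomials -/

/-- A sequence is unimodal if it first strictly decreases, then strictly increases. -/
def Unimodal (n : ℕ) (l : List (Fin n)) : Prop :=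
  ∃ k, (l.take (k + 1)).Chain' (fun a b => b < a) ∧ (l.drop k).Chain' (· < ·)

/-- The concatenation `t_L ⋯ t_{j+1} t_j` of the rows of a filling, from row `L-1`
down to row `j` (`0`-indexed). -/
def wordDown (n : ℕ) (row : ℕ → List (Fin n)) (L j : ℕ) : List (Fin n) :=
  ((List.range (L - j)).reverse).flatMap (fun t => row (j + t))

/-- A Kraśkiewicz tableau for `w` of shape `λ`: a filling of the Young diagram of `λ`
whose row word `t_r ⋯ t_1` is a reduced word for `w`, each row `t_i` being a unimodal
subsequence of maximal length in `t_r ⋯ t_{i+1} t_i`. -/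
structure KTableau (n : ℕ) (w : Equiv.Perm (Fin n × Bool)) (lam : PartitionN) : Type where
  row : ℕ → List (Fin n)
  row_len : ∀ i, (row i).length = lam.part i
  rowword_reduced : IsReducedWord n w (wordDown n row lam.len 0)
  row_unimodal : ∀ i, i < lam.len → Unimodal n (row i)
  row_max : ∀ i, i < lam.len → ∀ l' : List (Fin n),
    l'.Sublist (wordDown n row lam.len i) → Unimodal n l' → l'.length ≤ (row i).length

/-- The coefficient `e^w_{λ,π}`: the number of Kraśkiewicz tableaux for `w π⁻¹` of shape
`λ` if `ℓ(wπ⁻¹) = ℓ(w) - ℓ(π)`, and `0` otherwise. -/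
def eCoeff (n : ℕ) (w : Equiv.Perm (Fin n × Bool)) (lam : PartitionN)
    (π : Equiv.Perm (Fin n)) : ℕ :=
  if lengthW n (w * (sPerm n π)⁻¹) + lengthW n (sPerm n π) = lengthW n w then
    Nat.card (KTableau n (w * (sPerm n π)⁻¹) lam)
  else 0

open Classical in
/-- The symplectic Schubert polynomial
`ℭ_w(X_n) = ∑_{λ ∈ 𝒟_n, π ∈ S_n} e^w_{λ,π} 𝔠_{λ,π}(X_n)`. -/
def sympSchubert (n : ℕ) (w : Equiv.Perm (Fin n × Bool)) : MvP n :=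
  ∑ᶠ lam : PartitionN, ∑ π : Equiv.Perm (Fin n),
    (if lam.part 0 ≤ n ∧ lam.IsStrict then (eCoeff n w lam π : ℤ) else 0) • cPoly n lam π

/-! ### One-line notation, the longest element, and the scalar product -/

/-- The `i`-th entry `w_{i+1}` of a signed permutation in one-line notation, as an
integer. -/
def entryZ (n : ℕ) (w : Equiv.Perm (Fin n × Bool)) (i : Fin n) : ℤ :=
  if (w (i, false)).2 then -(((w (i, false)).1 : ℕ) + 1 : ℤ)
  else (((w (i, false)).1 : ℕ) + 1 : ℤ)

/-- Negation on `Bool` as an equivalence. -/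
def boolNot : Equiv.Perm Bool := ⟨not, not, Bool.not_not, Bool.not_not⟩

/-- The longest element `w_0 = (-1, -2, …, -n)` of `W_n`. -/
def w0perm (n : ℕ) : Equiv.Perm (Fin n × Bool) :=
  Equiv.prodCongr (Equiv.refl (Fin n)) boolNot

/-- The staircase partition `ρ_n = (n, n-1, …, 1)`. -/
def rhoPart (n : ℕ) : PartitionN :=
  ⟨fun i => n - i, fun _ _ h => Nat.sub_le_sub_left h n, ⟨n, Nat.sub_self n⟩⟩

/-- The Lascoux–Pragacz scalar product `⟨f, g⟩ = (-1)^{n(n-1)/2} ∂_{w_0}(fg)`. -/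
def innerP (n : ℕ) (f g : MvP n) : MvP n :=
  (-1 : MvP n) ^ (n * (n - 1) / 2) * ddW n (w0perm n) (f * g)

/-- The ideal `I_n` generated by `e_i(X_n^2)`, `1 ≤ i ≤ n`. -/
def In (n : ℕ) : Ideal (MvP n) :=
  Ideal.span { f | ∃ i, 1 ≤ i ∧ i ≤ n ∧ f = esymm2 n i }

section ElementarySymmetric

open Finset
open scoped Polynomial

theorem _root_.Finset.Nat.sum_antidiagonal_two_mul {M : Type*} [AddCommMonoid M] (k : ℕ)
    (f : ℕ → ℕ → M) (hf : ∀ i j, i + j = 2 * k → f i j = f j i) :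
    ∑ p ∈ antidiagonal (2 * k), f p.1 p.2
      = f k k + 2 • ∑ r ∈ Icc 1 k, f (k + r) (k - r) := by
  induction k generalizing f with
  | zero => simp
  | succ k ih =>
    have hshift := ih (fun i j => f (i + 1) (j + 1)) fun i j h => hf _ _ (by omega)
    have hIcc : ∑ r ∈ Icc 1 k, f (k + 1 + r) (k + 1 - r)
        = ∑ r ∈ Icc 1 k, f (k + r + 1) (k - r + 1) :=
      sum_congr rfl fun r hr => by
        have := (mem_Icc.mp hr).2
        rw [show k + 1 + r = k + r + 1 by omega, show k + 1 - r = k - r + 1 by omega]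
    rw [mul_add_one, Nat.antidiagonal_succ_succ', sum_cons, sum_cons, sum_map]
    simp only [Function.Embedding.coe_prodMap, Function.Embedding.coeFn_mk, Prod.map_fst,
      Prod.map_snd, Nat.succ_eq_add_one]
    rw [hshift, sum_Icc_succ_top (by omega), hIcc, hf 0 (2 * k + 2) (by omega),
      show k + 1 + (k + 1) = 2 * k + 2 by omega, Nat.sub_self, smul_add, two_smul]
    abel

theorem _root_.Multiset.esymm_cons_succ {R : Type*} [CommSemiring R] (a : R) (s : Multiset R)
    (k : ℕ) : (a ::ₘ s).esymm (k + 1) = s.esymm (k + 1) + a * s.esymm k := by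
  simp [Multiset.esymm, Multiset.powersetCard_cons, Multiset.sum_map_mul_left]

def _root_.Multiset.esymmGen {R : Type*} [CommSemiring R] (s : Multiset R) : R[X] :=
  (s.map fun a => 1 + Polynomial.C a * Polynomial.X).prod

theorem _root_.Multiset.coeff_esymmGen {R : Type*} [CommSemiring R] (s : Multiset R) (k : ℕ) :
    s.esymmGen.coeff k = s.esymm k := by
  induction s using Multiset.induction_on generalizing k with
  | empty =>
    cases k <;> simp [Multiset.esymmGen, Multiset.esymm, Multiset.powersetCard_zero_right,
      Polynomial.coeff_one]
  | cons a s ih =>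
    rw [Multiset.esymmGen, Multiset.map_cons, Multiset.prod_cons, ← Multiset.esymmGen]
    cases k with
    | zero => simp [Multiset.esymm, ih]
    | succ k =>
      simp [Multiset.esymm_cons_succ, ih, add_mul, mul_assoc, Polynomial.coeff_X_mul]

theorem _root_.Multiset.esymmGen_mul_esymmGen_neg {R : Type*} [CommRing R] (s : Multiset R) :
    s.esymmGen * (s.map Neg.neg).esymmGen
      = Polynomial.expand R 2 ((s.map (· ^ 2)).map Neg.neg).esymmGen := by
  have hfactor (a : R) :
      (1 + Polynomial.C a * Polynomial.X) * (1 + Polynomial.C (-a) * Polynomial.X)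
        = Polynomial.expand R 2 (1 + Polynomial.C (-a ^ 2) * Polynomial.X) := by
    simp only [_root_.map_add, map_one, map_mul, Polynomial.expand_C, Polynomial.expand_X,
      map_neg, map_pow]
    ring
  simp only [Multiset.esymmGen, Multiset.map_map, ← Multiset.prod_map_mul, map_multiset_prod,
    Function.comp_apply, hfactor]

theorem _root_.Multiset.esymm_sq_add_two_mul_sum_neg_one_pow_mul {R : Type*} [CommRing R]
    (s : Multiset R) (k : ℕ) :
    s.esymm k ^ 2 + 2 * ∑ r ∈ Icc 1 k, (-1) ^ r * s.esymm (k + r) * s.esymm (k - r)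
      = (s.map (· ^ 2)).esymm k := by
  have hcoeff := congrArg (Polynomial.coeff · (2 * k)) s.esymmGen_mul_esymmGen_neg
  simp only [Polynomial.coeff_mul, Polynomial.coeff_expand_mul' two_pos,
    Multiset.coeff_esymmGen, Multiset.esymm_neg] at hcoeff
  have hsign (i j : ℕ) (h : i + j = 2 * k) : (-1 : R) ^ i = (-1) ^ j :=
    neg_one_pow_congr (by rw [Nat.even_iff, Nat.even_iff]; omega)
  rw [Nat.sum_antidiagonal_two_mul k (fun i j => s.esymm i * ((-1) ^ j * s.esymm j))
    fun i j h => by rw [hsign i j h]; ring] at hcoeff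
  have hsum : ∑ r ∈ Icc 1 k, s.esymm (k + r) * ((-1) ^ (k - r) * s.esymm (k - r))
      = (-1) ^ k * ∑ r ∈ Icc 1 k, (-1) ^ r * s.esymm (k + r) * s.esymm (k - r) := by
    rw [mul_sum]
    refine sum_congr rfl fun r hr => ?_
    rw [← hsign (k + r) (k - r) (by have := (mem_Icc.mp hr).2; omega), pow_add]
    ring
  refine (isUnit_neg_one.pow k).mul_left_cancel ?_
  rw [← hcoeff, hsum, nsmul_eq_mul, Nat.cast_ofNat]
  ring

end ElementarySymmetric

theorem statement0_general (n k : ℕ) :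
    (esymm (Fin n) ℤ k) ^ 2
      + 2 * ∑ r ∈ Finset.Icc 1 k,
          (-1 : MvP n) ^ r * esymm (Fin n) ℤ (k + r) * esymm (Fin n) ℤ (k - r)
      = esymm2 n k := by
  have h := (Finset.univ.val.map (X : Fin n → MvP n)).esymm_sq_add_two_mul_sum_neg_one_pow_mul k
  rw [Multiset.map_map] at h
  rwa [esymm2, aeval_esymm_eq_multiset_esymm, esymm_eq_multiset_esymm]

/-- For every `k ≥ 0` and `n ≥ 1`,
`e_k(X_n)² + 2 ∑_{r=1}^{k} (-1)^r e_{k+r}(X_n) e_{k-r}(X_n) = e_k(X_n²)`;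
equivalently `Q̃_{k,k}(X_n) = e_k(x_1²,…,x_n²)`. -/
theorem statement0 (n k : ℕ) (hn : 1 ≤ n) :
    (esymm (Fin n) ℤ k) ^ 2
      + 2 * ∑ r ∈ Finset.Icc 1 k,
          (-1 : MvP n) ^ r * esymm (Fin n) ℤ (k + r) * esymm (Fin n) ℤ (k - r)
      = esymm2 n k :=
  statement0_general n k

end

end SympSchub
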